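/- arXiv:2004.03362 — 3 statements merged into one kernel-verified Lean document; each statement's English description precedes it below -/
import Mathlib

section
/- Let K be a finite pure simplicial complex of dimension n − 1 that is a pseudomanifold, i.e., every (n − 2)-dimensional face of K is contained in exactly two facets. Suppose i ≠ j are vertices of K such that every facet of K contains i or contains j, and {i, j} is not a face of K. Then lk_i K = lk_j K. -/
/-- `K` is an (abstract) simplicial complex: closed under taking subsets. -/
def IsComplex {V : Type*} [DecidableEq V] (K : Set (Finset V)) : Prop :=
  ∀ σ ∈ K, ∀ τ ⊆ σ, τ ∈ K

lemma stmt10_aux {V : Type*} [DecidableEq V] (K : Set (Finset V)) (n : ℕ)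
    (hK : IsComplex K)
    (hpure : ∀ σ ∈ K, ∃ F ∈ K, σ ⊆ F ∧ F.card = n)
    (hpm : ∀ ρ ∈ K, ρ.card = n - 1 →
      ∃ F₁ F₂ : Finset V, F₁ ∈ K ∧ F₂ ∈ K ∧ F₁ ≠ F₂ ∧
        F₁.card = n ∧ F₂.card = n ∧ ρ ⊆ F₁ ∧ ρ ⊆ F₂ ∧
        ∀ F ∈ K, F.card = n → ρ ⊆ F → F = F₁ ∨ F = F₂)
    (i j : V)
    (hnon : ({i, j} : Finset V) ∉ K)
    (hfac : ∀ F ∈ K, F.card = n → i ∈ F ∨ j ∈ F)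
    (τ : Finset V) (hτ : τ ∈ K) (hiτ : i ∉ τ) (hins : insert i τ ∈ K) :
    τ ∈ K ∧ j ∉ τ ∧ insert j τ ∈ K := by
  have hjτ : j ∉ τ := by
    intro hjτ
    exact hnon (hK _ hins _ (Finset.insert_subset (Finset.mem_insert_self _ _)
      (Finset.singleton_subset_iff.2 (Finset.mem_insert_of_mem hjτ))))
  obtain ⟨F, hF, hσF, hFcard⟩ := hpure (insert i τ) hins
  have hiF : i ∈ F := hσF (Finset.mem_insert_self _ _)
  have hjF : j ∉ F := by
    intro hjF
    exact hnon (hK F hF _ (Finset.insert_subset hiF (Finset.singleton_subset_iff.2 hjF)))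
  set ρ := F.erase i with hρ
  have hρK : ρ ∈ K := hK F hF ρ (Finset.erase_subset _ _)
  have hρcard : ρ.card = n - 1 := by
    rw [hρ, Finset.card_erase_of_mem hiF, hFcard]
  have hinsρ : insert i ρ = F := Finset.insert_erase hiF
  have hτρ : τ ⊆ ρ := Finset.subset_erase.2 ⟨(Finset.subset_insert i τ).trans hσF, hiτ⟩
  obtain ⟨F₁, F₂, hF₁, hF₂, hne, hc₁, hc₂, hρ₁, hρ₂, huniq⟩ := hpm ρ hρK hρcard
  -- Let G be the facet among F₁,F₂ different from F
  have key : ∀ G ∈ K, G.card = n → ρ ⊆ G → G ≠ F → insert j τ ∈ K := by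
    intro G hG hGc hρG hGF
    have hiG : i ∉ G := by
      intro hiG
      have : F ⊆ G := by rw [← hinsρ]; exact Finset.insert_subset hiG hρG
      exact hGF (Finset.eq_of_subset_of_card_le this (by rw [hGc, hFcard])).symm
    have hjG : j ∈ G := (hfac G hG hGc).resolve_left hiG
    exact hK G hG _ (Finset.insert_subset hjG (hτρ.trans hρG))
  have hFeq := huniq F hF hFcard (Finset.erase_subset _ _)
  refine ⟨hτ, hjτ, ?_⟩
  rcases hFeq with rfl | rfl
  · exact key F₂ hF₂ hc₂ hρ₂ (Ne.symm hne)
  · exact key F₁ hF₁ hc₁ hρ₁ hne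

/-- Let `K` be a pure `(n−1)`-dimensional pseudomanifold (each `(n−2)`-face lies in
exactly two facets). If `i ≠ j` are vertices with `{i, j} ∉ K` such that every facet
contains `i` or `j`, then `lk_i K = lk_j K`. -/
theorem stmt10 {V : Type*} [DecidableEq V] (K : Set (Finset V)) (n : ℕ)
    (hK : IsComplex K)
    (hdim : ∀ σ ∈ K, σ.card ≤ n)
    (hpure : ∀ σ ∈ K, ∃ F ∈ K, σ ⊆ F ∧ F.card = n)
    (hpm : ∀ ρ ∈ K, ρ.card = n - 1 →
      ∃ F₁ F₂ : Finset V, F₁ ∈ K ∧ F₂ ∈ K ∧ F₁ ≠ F₂ ∧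
        F₁.card = n ∧ F₂.card = n ∧ ρ ⊆ F₁ ∧ ρ ⊆ F₂ ∧
        ∀ F ∈ K, F.card = n → ρ ⊆ F → F = F₁ ∨ F = F₂)
    (i j : V) (hij : i ≠ j)
    (hi : ({i} : Finset V) ∈ K) (hj : ({j} : Finset V) ∈ K)
    (hnon : ({i, j} : Finset V) ∉ K)
    (hfac : ∀ F ∈ K, F.card = n → i ∈ F ∨ j ∈ F) :
    ∀ τ : Finset V,
      (τ ∈ K ∧ i ∉ τ ∧ insert i τ ∈ K) ↔ (τ ∈ K ∧ j ∉ τ ∧ insert j τ ∈ K) := by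
  have hnon' : ({j, i} : Finset V) ∉ K := by rwa [Finset.pair_comm]
  have hfac' : ∀ F ∈ K, F.card = n → j ∈ F ∨ i ∈ F := fun F hF hc => (hfac F hF hc).symm
  intro τ
  constructor
  · rintro ⟨h1, h2, h3⟩
    exact stmt10_aux K n hK hpure hpm i j hnon hfac τ h1 h2 h3
  · rintro ⟨h1, h2, h3⟩
    exact stmt10_aux K n hK hpure hpm j i hnon' hfac' τ h1 h2 h3
end

section
/- Let K be a simplicial complex whose geometric realization is S² (a simplicial 2-sphere), and let K' be its barycentric subdivision, with vertices v_σ indexed by the nonempty faces σ of K and faces the chains of faces of K ordered by inclusion. Suppose I = {v_{σ₁}, v_{σ₂}, v_{σ₃}, v_{σ₄}} is a four-element set of vertices of K' such that the full subcomplex K'_I is a 4-circuit (a cycle of length 4). Then, after renumbering, σ₁ and σ₂ are vertices of K, σ₃ and σ₄ are triangles of K, the set τ = σ₁ ∪ σ₂ is the common edge of σ₃ and σ₄, and K'_I = lk_{v_τ} K'. -/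
/-- The faces of the barycentric subdivision `K'` of `K`: chains of nonempty faces of
`K` ordered by inclusion. -/
def barySub {V : Type*} [DecidableEq V] (K : Set (Finset V)) :
    Set (Finset (Finset V)) :=
  {C | (∀ σ ∈ C, σ ∈ K ∧ σ.Nonempty) ∧ ∀ σ ∈ C, ∀ τ ∈ C, σ ⊆ τ ∨ τ ⊆ σ}

/-- Key lemma: the "lows/highs" form of the statement. -/
lemma key14 {V : Type*} [DecidableEq V] (K : Set (Finset V)) (hK : IsComplex K)
    (hdim : ∀ σ ∈ K, σ.card ≤ 3)
    (hpm : ∀ e ∈ K, e.card = 2 →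
      ∃ t₁ t₂ : Finset V, t₁ ∈ K ∧ t₂ ∈ K ∧ t₁ ≠ t₂ ∧ t₁.card = 3 ∧ t₂.card = 3 ∧
        e ⊆ t₁ ∧ e ⊆ t₂ ∧ ∀ t ∈ K, t.card = 3 → e ⊆ t → t = t₁ ∨ t = t₂)
    (L₁ L₂ H₁ H₂ : Finset V)
    (hL₁ : L₁ ∈ K) (hH₁ : H₁ ∈ K) (hH₂ : H₂ ∈ K)
    (hnL₁ : L₁.Nonempty) (hnL₂ : L₂.Nonempty)
    (hHne : H₁ ≠ H₂)
    (hiL : ¬ (L₁ ⊆ L₂ ∨ L₂ ⊆ L₁)) (hiH : ¬ (H₁ ⊆ H₂ ∨ H₂ ⊆ H₁))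
    (s11 : L₁ ⊆ H₁) (s12 : L₁ ⊆ H₂) (s21 : L₂ ⊆ H₁) (s22 : L₂ ⊆ H₂) :
    ({L₁, L₂, H₁, H₂} : Finset (Finset V)) = {L₁, L₂, H₁, H₂} ∧
      L₁.card = 1 ∧ L₂.card = 1 ∧ H₁.card = 3 ∧ H₂.card = 3 ∧ H₁ ≠ H₂ ∧
      (L₁ ∪ L₂) ∈ K ∧ (L₁ ∪ L₂).card = 2 ∧ L₁ ∪ L₂ ⊆ H₁ ∧ L₁ ∪ L₂ ⊆ H₂ ∧
      ∀ C : Finset (Finset V),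
        (C ∈ barySub K ∧ ∀ x ∈ C, x ∈ ({L₁, L₂, H₁, H₂} : Finset (Finset V))) ↔
        (C ∈ barySub K ∧ (L₁ ∪ L₂) ∉ C ∧ insert (L₁ ∪ L₂) C ∈ barySub K) := by
  push_neg at hiL hiH
  obtain ⟨hiL1, hiL2⟩ := hiL
  obtain ⟨hiH1, hiH2⟩ := hiH
  have hτH₁ : L₁ ∪ L₂ ⊆ H₁ := Finset.union_subset s11 s21
  have hτH₂ : L₁ ∪ L₂ ⊆ H₂ := Finset.union_subset s12 s22
  have hτne1 : L₁ ∪ L₂ ≠ H₁ := by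
    intro h; exact hiH1 (h ▸ hτH₂)
  have hτne2 : L₁ ∪ L₂ ≠ H₂ := by
    intro h; exact hiH2 (h ▸ hτH₁)
  have hss1 : L₁ ∪ L₂ ⊂ H₁ := Finset.ssubset_iff_subset_ne.mpr ⟨hτH₁, hτne1⟩
  have hss2 : L₁ ∪ L₂ ⊂ H₂ := Finset.ssubset_iff_subset_ne.mpr ⟨hτH₂, hτne2⟩
  have hcH₁le := hdim H₁ hH₁
  have hcH₂le := hdim H₂ hH₂
  have hcτlt1 : (L₁ ∪ L₂).card < H₁.card := Finset.card_lt_card hss1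
  have hL1ssτ : L₁ ⊂ L₁ ∪ L₂ := by
    refine Finset.ssubset_iff_subset_ne.mpr ⟨Finset.subset_union_left, ?_⟩
    intro h
    exact hiL2 (by rw [h]; exact Finset.subset_union_right)
  have hL2ssτ : L₂ ⊂ L₁ ∪ L₂ := by
    refine Finset.ssubset_iff_subset_ne.mpr ⟨Finset.subset_union_right, ?_⟩
    intro h
    exact hiL1 (by rw [h]; exact Finset.subset_union_left)
  have hc1lt : L₁.card < (L₁ ∪ L₂).card := Finset.card_lt_card hL1ssτ
  have hc2lt : L₂.card < (L₁ ∪ L₂).card := Finset.card_lt_card hL2ssτ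
  have hunle : (L₁ ∪ L₂).card ≤ L₁.card + L₂.card := Finset.card_union_le _ _
  have hL1pos : 0 < L₁.card := Finset.card_pos.mpr hnL₁
  have hL2pos : 0 < L₂.card := Finset.card_pos.mpr hnL₂
  have hcL₁ : L₁.card = 1 := by omega
  have hcL₂ : L₂.card = 1 := by omega
  have hcτ : (L₁ ∪ L₂).card = 2 := by omega
  have hcτlt2 : (L₁ ∪ L₂).card < H₂.card := Finset.card_lt_card hss2
  have hcH₁ : H₁.card = 3 := by omega
  have hcH₂ : H₂.card = 3 := by omega
  have hτK : (L₁ ∪ L₂) ∈ K := hK H₁ hH₁ _ hτH₁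
  refine ⟨rfl, hcL₁, hcL₂, hcH₁, hcH₂, hHne, hτK, hcτ, hτH₁, hτH₂, ?_⟩
  intro C
  constructor
  · rintro ⟨hC, hmem⟩
    refine ⟨hC, ?_, ?_, ?_⟩
    · intro h
      have := hmem _ h
      simp only [Finset.mem_insert, Finset.mem_singleton] at this
      rcases this with h' | h' | h' | h' <;> rw [h'] at hcτ <;> omega
    · intro σ hσ
      rcases Finset.mem_insert.mp hσ with rfl | hσ
      · exact ⟨hτK, Finset.card_pos.mp (by omega)⟩
      · exact hC.1 σ hσ
    · intro σ hσ ρ hρ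
      have comp : ∀ x ∈ C, (L₁ ∪ L₂) ⊆ x ∨ x ⊆ (L₁ ∪ L₂) := by
        intro x hx
        have := hmem x hx
        simp only [Finset.mem_insert, Finset.mem_singleton] at this
        rcases this with rfl | rfl | rfl | rfl
        · exact Or.inr Finset.subset_union_left
        · exact Or.inr Finset.subset_union_right
        · exact Or.inl hτH₁
        · exact Or.inl hτH₂
      rcases Finset.mem_insert.mp hσ with rfl | hσ
      · rcases Finset.mem_insert.mp hρ with rfl | hρ
        · exact Or.inl Finset.Subset.rfl
        · exact comp ρ hρ
      · rcases Finset.mem_insert.mp hρ with rfl | hρ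
        · exact (comp σ hσ).symm
        · exact hC.2 σ hσ ρ hρ
  · rintro ⟨hC, hτC, hins⟩
    refine ⟨hC, fun x hx => ?_⟩
    obtain ⟨hxK, hxne⟩ := hC.1 x hx
    have hxτ : x ≠ L₁ ∪ L₂ := by
      intro h; exact hτC (h ▸ hx)
    have hcmp := hins.2 (L₁ ∪ L₂) (Finset.mem_insert_self _ _) x (Finset.mem_insert_of_mem hx)
    simp only [Finset.mem_insert, Finset.mem_singleton]
    rcases hcmp with hsub | hsub
    · -- τ ⊊ x, so x is a triangle containing the edge τ
      have hxss : L₁ ∪ L₂ ⊂ x := Finset.ssubset_iff_subset_ne.mpr ⟨hsub, fun h => hxτ h.symm⟩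
      have hcx : x.card = 3 := by
        have h1 := Finset.card_lt_card hxss
        have h2 := hdim x hxK
        omega
      obtain ⟨t₁', t₂', m1, m2, hne', c1, c2, e1, e2, huniq⟩ := hpm _ hτK hcτ
      have eH₁ := huniq H₁ hH₁ hcH₁ hτH₁
      have eH₂ := huniq H₂ hH₂ hcH₂ hτH₂
      have ex := huniq x hxK hcx hsub
      rcases eH₁ with h | h <;> rcases eH₂ with h' | h' <;> rcases ex with h'' | h'' <;>
        simp_all <;> tauto
    · -- x ⊊ τ, so x is one of the two vertices of τ
      have hxss : x ⊂ L₁ ∪ L₂ := Finset.ssubset_iff_subset_ne.mpr ⟨hsub, hxτ⟩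
      have hcx : x.card = 1 := by
        have h1 := Finset.card_lt_card hxss
        have h2 := Finset.card_pos.mpr hxne
        omega
      obtain ⟨c, rfl⟩ := Finset.card_eq_one.mp hcx
      have hcmem : c ∈ L₁ ∪ L₂ := hsub (Finset.mem_singleton_self c)
      obtain ⟨a, ha⟩ := Finset.card_eq_one.mp hcL₁
      obtain ⟨b, hb⟩ := Finset.card_eq_one.mp hcL₂
      rw [ha, hb] at hcmem
      simp only [Finset.mem_union, Finset.mem_singleton] at hcmem
      rcases hcmem with rfl | rfl
      · exact Or.inl ha.symm
      · exact Or.inr (Or.inl hb.symm)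

set_option maxHeartbeats 1000000 in
/-- Let `K` be a simplicial 2-sphere (pure 2-dimensional, every edge in exactly two
triangles) and `K'` its barycentric subdivision. If the full subcomplex of `K'` on
four distinct vertices `σ₁, σ₂, σ₃, σ₄` (nonempty faces of `K`) is a 4-circuit with
consecutive pairs comparable and diagonal pairs incomparable, then after renumbering
`σ₁, σ₂` are vertices of `K`, `σ₃, σ₄` are triangles of `K`, `τ = σ₁ ∪ σ₂` is their
common edge, and `K'` restricted to these four vertices equals `lk_{v_τ} K'`. -/
theorem stmt14 {V : Type*} [DecidableEq V] (K : Set (Finset V)) (hK : IsComplex K)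
    (hdim : ∀ σ ∈ K, σ.card ≤ 3)
    (hpure : ∀ σ ∈ K, σ.Nonempty → ∃ F ∈ K, σ ⊆ F ∧ F.card = 3)
    (hpm : ∀ e ∈ K, e.card = 2 →
      ∃ t₁ t₂ : Finset V, t₁ ∈ K ∧ t₂ ∈ K ∧ t₁ ≠ t₂ ∧ t₁.card = 3 ∧ t₂.card = 3 ∧
        e ⊆ t₁ ∧ e ⊆ t₂ ∧ ∀ t ∈ K, t.card = 3 → e ⊆ t → t = t₁ ∨ t = t₂)
    (σ₁ σ₂ σ₃ σ₄ : Finset V)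
    (h₁ : σ₁ ∈ K) (h₂ : σ₂ ∈ K) (h₃ : σ₃ ∈ K) (h₄ : σ₄ ∈ K)
    (hn₁ : σ₁.Nonempty) (hn₂ : σ₂.Nonempty) (hn₃ : σ₃.Nonempty) (hn₄ : σ₄.Nonempty)
    (hd₁₂ : σ₁ ≠ σ₂) (hd₁₃ : σ₁ ≠ σ₃) (hd₁₄ : σ₁ ≠ σ₄)
    (hd₂₃ : σ₂ ≠ σ₃) (hd₂₄ : σ₂ ≠ σ₄) (hd₃₄ : σ₃ ≠ σ₄)
    (hc₁₂ : σ₁ ⊆ σ₂ ∨ σ₂ ⊆ σ₁) (hc₂₃ : σ₂ ⊆ σ₃ ∨ σ₃ ⊆ σ₂)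
    (hc₃₄ : σ₃ ⊆ σ₄ ∨ σ₄ ⊆ σ₃) (hc₄₁ : σ₄ ⊆ σ₁ ∨ σ₁ ⊆ σ₄)
    (hi₁₃ : ¬ (σ₁ ⊆ σ₃ ∨ σ₃ ⊆ σ₁)) (hi₂₄ : ¬ (σ₂ ⊆ σ₄ ∨ σ₄ ⊆ σ₂)) :
    ∃ v₁ v₂ t₁ t₂ : Finset V,
      ({v₁, v₂, t₁, t₂} : Finset (Finset V)) = {σ₁, σ₂, σ₃, σ₄} ∧
      v₁.card = 1 ∧ v₂.card = 1 ∧ t₁.card = 3 ∧ t₂.card = 3 ∧ t₁ ≠ t₂ ∧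
      (v₁ ∪ v₂) ∈ K ∧ (v₁ ∪ v₂).card = 2 ∧ v₁ ∪ v₂ ⊆ t₁ ∧ v₁ ∪ v₂ ⊆ t₂ ∧
      ∀ C : Finset (Finset V),
        (C ∈ barySub K ∧ ∀ x ∈ C, x ∈ ({σ₁, σ₂, σ₃, σ₄} : Finset (Finset V))) ↔
        (C ∈ barySub K ∧ (v₁ ∪ v₂) ∉ C ∧ insert (v₁ ∪ v₂) C ∈ barySub K) := by
  rcases hc₁₂ with h12 | h21
  · -- lows σ₁, σ₃; highs σ₂, σ₄
    have h32 : σ₃ ⊆ σ₂ := by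
      rcases hc₂₃ with h | h
      · exact absurd (Or.inl (h12.trans h)) hi₁₃
      · exact h
    have h34 : σ₃ ⊆ σ₄ := by
      rcases hc₃₄ with h | h
      · exact h
      · exact absurd (Or.inr (h.trans h32)) hi₂₄
    have h14 : σ₁ ⊆ σ₄ := by
      rcases hc₄₁ with h | h
      · exact absurd (Or.inr (h34.trans h)) hi₁₃
      · exact h
    obtain ⟨_, hc1, hc2, hc3, hc4, hne, hK', hc', hs1, hs2, hiff⟩ :=
      key14 K hK hdim hpm σ₁ σ₃ σ₂ σ₄ h₁ h₂ h₄ hn₁ hn₃ hd₂₄ hi₁₃ hi₂₄ h12 h14 h32 h34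
    have hset : ({σ₁, σ₃, σ₂, σ₄} : Finset (Finset V)) = {σ₁, σ₂, σ₃, σ₄} := by
      ext x; simp only [Finset.mem_insert, Finset.mem_singleton]; tauto
    rw [hset] at hiff
    exact ⟨σ₁, σ₃, σ₂, σ₄, hset, hc1, hc2, hc3, hc4, hne, hK', hc', hs1, hs2, hiff⟩
  · -- lows σ₂, σ₄; highs σ₁, σ₃
    have h23 : σ₂ ⊆ σ₃ := by
      rcases hc₂₃ with h | h
      · exact h
      · exact absurd (Or.inr (h.trans h21)) hi₁₃
    have h43 : σ₄ ⊆ σ₃ := by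
      rcases hc₃₄ with h | h
      · exact absurd (Or.inl (h23.trans h)) hi₂₄
      · exact h
    have h41 : σ₄ ⊆ σ₁ := by
      rcases hc₄₁ with h | h
      · exact h
      · exact absurd (Or.inl (h.trans h43)) hi₁₃
    obtain ⟨_, hc1, hc2, hc3, hc4, hne, hK', hc', hs1, hs2, hiff⟩ :=
      key14 K hK hdim hpm σ₂ σ₄ σ₁ σ₃ h₂ h₁ h₃ hn₂ hn₄ hd₁₃ hi₂₄ hi₁₃ h21 h23 h41 h43
    have hset : ({σ₂, σ₄, σ₁, σ₃} : Finset (Finset V)) = {σ₁, σ₂, σ₃, σ₄} := by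
      ext x; simp only [Finset.mem_insert, Finset.mem_singleton]; tauto
    rw [hset] at hiff
    exact ⟨σ₂, σ₄, σ₁, σ₃, hset, hc1, hc2, hc3, hc4, hne, hK', hc', hs1, hs2, hiff⟩
end

section
/- Let K be a flag simplicial complex with vertex set V, |V| ≥ 3, satisfying K = core K, and assume K satisfies the separable circuit condition (SCC). Then K is not a suspension: there is no missing face ω = {i₁, i₂} of K such that every vertex v ∈ V \ ω is joined by an edge to both i₁ and i₂. -/
/-- `I` is a missing face (minimal non-face) of `K`. -/
def MissingFace {V : Type*} [DecidableEq V] (K : Set (Finset V)) (I : Finset V) : Prop :=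
  I ∉ K ∧ ∀ J ⊂ I, J ∈ K

/-- `K` is flag: every missing face has exactly two elements. -/
def IsFlag {V : Type*} [DecidableEq V] (K : Set (Finset V)) : Prop :=
  ∀ I : Finset V, MissingFace K I → I.card = 2

/-- The 1-skeleton of the full subcomplex `K_I`, as a simple graph on `I`. -/
def skeletonGraph {V : Type*} [DecidableEq V] (K : Set (Finset V)) (I : Finset V) :
    SimpleGraph {x // x ∈ I} where
  Adj a b := a ≠ b ∧ ({a.1, b.1} : Finset V) ∈ K
  symm := by
    constructor
    intro a b h
    exact ⟨h.1.symm, by rw [Finset.pair_comm]; exact h.2⟩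
  loopless := by
    constructor
    intro a h
    exact h.1 rfl

/-- The full subcomplex `K_I` is a circuit (its geometric realization is `S¹`):
it is 1-dimensional, every vertex of `I` lies in exactly two edges of `K_I`, and
its 1-skeleton is connected. -/
def IsCircuit {V : Type*} [DecidableEq V] (K : Set (Finset V)) (I : Finset V) : Prop :=
  (∀ σ ∈ K, σ ⊆ I → σ.card ≤ 2) ∧
  (∀ i ∈ I, ∃ j₁ ∈ I, ∃ j₂ ∈ I, j₁ ≠ j₂ ∧ j₁ ≠ i ∧ j₂ ≠ i ∧
    ({i, j₁} : Finset V) ∈ K ∧ ({i, j₂} : Finset V) ∈ K ∧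
    ∀ j ∈ I, j ≠ i → ({i, j} : Finset V) ∈ K → j = j₁ ∨ j = j₂) ∧
  (skeletonGraph K I).Connected

/-- `K` satisfies the separable circuit condition (SCC). -/
def SCC {V : Type*} [DecidableEq V] (K : Set (Finset V)) : Prop :=
  ∀ i₁ i₂ ik : V, i₁ ≠ i₂ → ik ≠ i₁ → ik ≠ i₂ →
    MissingFace K {i₁, i₂} →
    ∃ I : Finset V, i₁ ∈ I ∧ i₂ ∈ I ∧ ik ∉ I ∧ IsCircuit K I ∧
      ¬ (skeletonGraph K (insert ik (I \ {i₁, i₂}))).Connected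

section

variable {V : Type*} [DecidableEq V] {K : Set (Finset V)}

/-- A minimal non-face among the subsets of `σ` would be a missing face with two elements,
i.e. an edge. -/
theorem IsFlag.mem_of_pairwise (hflag : IsFlag K) {σ : Finset V}
    (hσ : (σ : Set V).Pairwise fun x y => ({x, y} : Finset V) ∈ K) : σ ∈ K := by
  induction σ using Finset.strongInduction with
  | H σ ih =>
    by_contra hσK
    have hmissing : MissingFace K σ :=
      ⟨hσK, fun τ hτ => ih τ hτ (hσ.mono (Finset.coe_subset.mpr hτ.subset))⟩
    obtain ⟨x, y, hxy, rfl⟩ := Finset.card_eq_two.mp (hflag σ hmissing)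
    exact hσK (hσ (by simp) (by simp) hxy)

theorem IsFlag.missingFace_pair (hflag : IsFlag K) {a b : V}
    (hab : ({a, b} : Finset V) ∉ K) : MissingFace K {a, b} := by
  refine ⟨hab, fun J hJ => hflag.mem_of_pairwise ?_⟩
  have hJ : J.card ≤ 1 := Nat.le_of_lt_succ ((Finset.card_lt_card hJ).trans_le Finset.card_le_two)
  exact fun x hx y hy hxy => absurd (Finset.card_le_one.mp hJ x hx y hy) hxy

theorem IsCircuit.pair_notMem_of_common_neighbor (hflag : IsFlag K) {I : Finset V}
    (hI : IsCircuit K I) {x y z : V} (hx : x ∈ I) (hy : y ∈ I) (hz : z ∈ I)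
    (hxy : x ≠ y) (hxz : x ≠ z) (hyz : y ≠ z)
    (hxyK : ({x, y} : Finset V) ∈ K) (hxzK : ({x, z} : Finset V) ∈ K) :
    ({y, z} : Finset V) ∉ K := by
  intro hyzK
  have htriangle : ({x, y, z} : Finset V) ∈ K := by
    refine hflag.mem_of_pairwise ?_
    simp only [Finset.coe_insert, Finset.coe_singleton, Set.pairwise_insert,
      Set.pairwise_singleton, Set.mem_insert_iff, Set.mem_singleton_iff]
    grind [Finset.pair_comm]
  have hcard : ({x, y, z} : Finset V).card = 3 :=
    Finset.card_eq_three.mpr ⟨x, y, z, hxy, hxz, hyz, rfl⟩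
  have := hI.1 _ htriangle (by simp [Finset.insert_subset_iff, hx, hy, hz])
  omega

theorem skeletonGraph_connected_of_suspension {i₁ i₂ v : V} {J : Finset V}
    (hsusp : ∀ u : V, u ≠ i₁ → u ≠ i₂ →
      ({u, i₁} : Finset V) ∈ K ∧ ({u, i₂} : Finset V) ∈ K)
    (hi₁ : i₁ ∈ J) (hv : v ∈ J) (hv₁ : v ≠ i₁) (hv₂ : v ≠ i₂) :
    (skeletonGraph K J).Connected := by
  have hadj : ∀ {a b : V} (ha : a ∈ J) (hb : b ∈ J), a ≠ b → ({a, b} : Finset V) ∈ K →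
      (skeletonGraph K J).Reachable ⟨a, ha⟩ ⟨b, hb⟩ :=
    fun _ _ hab hK => SimpleGraph.Adj.reachable ⟨fun h => hab (congrArg Subtype.val h), hK⟩
  rw [SimpleGraph.connected_iff_exists_forall_reachable]
  refine ⟨⟨i₁, hi₁⟩, fun ⟨u, hu⟩ => SimpleGraph.Reachable.symm ?_⟩
  by_cases hu₁ : u = i₁
  · subst hu₁; rfl
  by_cases hu₂ : u = i₂
  · subst hu₂
    exact (hadj hu hv (Ne.symm hv₂) (Finset.pair_comm v u ▸ (hsusp v hv₁ hv₂).2)).trans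
      (hadj hv hi₁ hv₁ (hsusp v hv₁ hv₂).1)
  · exact hadj hu hi₁ hu₁ (hsusp u hu₁ hu₂).1

end

theorem stmt17_general {V : Type*} [Fintype V] [DecidableEq V] (K : Set (Finset V))
    (hcard : 3 ≤ Fintype.card V)
    (hflag : IsFlag K)
    (hSCC : SCC K) :
    ¬ ∃ i₁ i₂ : V, i₁ ≠ i₂ ∧ MissingFace K {i₁, i₂} ∧
      ∀ v : V, v ≠ i₁ → v ≠ i₂ →
        ({v, i₁} : Finset V) ∈ K ∧ ({v, i₂} : Finset V) ∈ K := by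
  rintro ⟨i₁, i₂, hne, hω, hsusp⟩
  obtain ⟨ik, -, hik⟩ := Finset.exists_mem_notMem_of_card_lt_card
    (s := {i₁, i₂}) (t := Finset.univ) (Finset.card_le_two.trans_lt hcard)
  simp only [Finset.mem_insert, Finset.mem_singleton, not_or] at hik
  obtain ⟨I, hi₁I, -, -, hI, -⟩ := hSCC i₁ i₂ ik hne hik.1 hik.2 hω
  obtain ⟨a, haI, b, hbI, hab, hai₁, hbi₁, hKa, hKb, -⟩ := hI.2.1 i₁ hi₁I
  have habK : ({a, b} : Finset V) ∉ K :=
    hI.pair_notMem_of_common_neighbor hflag hi₁I haI hbI hai₁.symm hbi₁.symm hab hKa hKb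
  obtain ⟨I', haI', -, hi₁I', hI', hdisconnected⟩ :=
    hSCC a b i₁ hab hai₁.symm hbi₁.symm (hflag.missingFace_pair habK)
  obtain ⟨j₁, hj₁, j₂, hj₂, hj, hj₁a, hj₂a, hKj₁, hKj₂, -⟩ := hI'.2.1 a haI'
  obtain ⟨v, hvI', hva, hKav, hvi₂⟩ : ∃ v ∈ I', v ≠ a ∧ ({a, v} : Finset V) ∈ K ∧ v ≠ i₂ := by
    by_cases h : j₁ = i₂
    · exact ⟨j₂, hj₂, hj₂a, hKj₂, h ▸ hj.symm⟩
    · exact ⟨j₁, hj₁, hj₁a, hKj₁, h⟩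
  have hvb : v ≠ b := by rintro rfl; exact habK hKav
  exact hdisconnected <| skeletonGraph_connected_of_suspension hsusp
    (Finset.mem_insert_self _ _) (Finset.mem_insert_of_mem (by simp [hvI', hva, hvb]))
    (ne_of_mem_of_not_mem hvI' hi₁I') hvi₂

/-- A flag complex on at least three vertices with `K = core K` satisfying the SCC
is not a suspension: there is no missing face `ω = {i₁, i₂}` such that every other
vertex is joined by an edge to both `i₁` and `i₂`. -/
theorem stmt17 {V : Type*} [Fintype V] [DecidableEq V] (K : Set (Finset V))
    (hK : IsComplex K) (hcard : 3 ≤ Fintype.card V)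
    (hvert : ∀ i : V, ({i} : Finset V) ∈ K)
    (hflag : IsFlag K)
    (hcore : ∀ i : V, ∃ σ ∈ K, insert i σ ∉ K)
    (hSCC : SCC K) :
    ¬ ∃ i₁ i₂ : V, i₁ ≠ i₂ ∧ MissingFace K {i₁, i₂} ∧
      ∀ v : V, v ≠ i₁ → v ≠ i₂ →
        ({v, i₁} : Finset V) ∈ K ∧ ({v, i₂} : Finset V) ∈ K :=
  stmt17_general K hcard hflag hSCC
end
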